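/- arXiv:2603.29330 — 5 statements merged into one kernel-verified Lean document; each statement's English description precedes it below -/
import Mathlib

section
/- For all t ≥ T := √(2r²/(9μ)), the derivative of E satisfies E'(t) = − t^{2r/3} ( (2r/(3t))·( f_* − f(x(t)) − ⟨∇f(x(t)), x_* − x(t)⟩ ) − ((2r³ − 18r)/(27t³))·‖x(t) − x_*‖² ). -/
open scoped RealInnerProductSpace

/-!
Differentiate `E` by the product and chain rules and replace `ẍ` by `-(r/t) ẋ - ∇f(x)`.
With `u = x - x_*`, the weight `2r/3` in both the exponent and the velocity shift makes the
`‖ẋ‖²` terms cancel, and the coefficient `(r² - 3r)/9` is exactly the one that cancels the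
`⟪u, ẋ⟫` terms; what remains is linear in `f(x) - f_*`, `⟪∇f(x), u⟫` and `‖u‖²`.
-/

section

variable {F : Type*} [NormedAddCommGroup F] [InnerProductSpace ℝ F]

theorem HasGradientAt.comp_hasDerivAt [CompleteSpace F] {f : F → ℝ} {g v : F} {x : ℝ → F}
    {t : ℝ} (hf : HasGradientAt f g (x t)) (hx : HasDerivAt x v t) :
    HasDerivAt (fun s => f (x s)) ⟪g, v⟫ t :=
  hf.hasFDerivAt.comp_hasDerivAt t hx

theorem hasDerivAt_div_sq_mul_norm_sub_sq {x : ℝ → F} {v : F} {t : ℝ} (k : ℝ) (y : F)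
    (hx : HasDerivAt x v t) (ht : t ≠ 0) :
    HasDerivAt (fun s => k / s ^ 2 * ‖x s - y‖ ^ 2)
      (k / t ^ 2 * (2 * ⟪x t - y, v⟫) - 2 * k / t ^ 3 * ‖x t - y‖ ^ 2) t := by
  refine (((hasDerivAt_const t k).div (hasDerivAt_pow 2 t) (pow_ne_zero 2 ht)).mul
    (hx.sub_const y).norm_sq).congr_deriv ?_
  simp only [Pi.div_apply]
  field_simp
  ring

theorem hasDerivAt_add_div_smul_sub {x y : ℝ → F} {v w : F} {t : ℝ} (b : ℝ) (z : F)
    (hx : HasDerivAt x v t) (hy : HasDerivAt y w t) (ht : t ≠ 0) :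
    HasDerivAt (fun s => y s + (b / s) • (x s - z))
      (w + (b / t) • v - (b / t ^ 2) • (x t - z)) t := by
  refine (hy.add (((hasDerivAt_const t b).div (hasDerivAt_id t) ht).smul
    (hx.sub_const z))).congr_deriv ?_
  simp only [Pi.div_apply, id]
  module

theorem nag_lyapunov_deriv_identity (r t D : ℝ) (p z v g : F) (ht : t ≠ 0) :
    2 * r / 3 / t * (D - (r ^ 2 - 3 * r) / 9 / t ^ 2 * ‖p - z‖ ^ 2
        + 1 / 2 * ‖v + (2 * r / 3 / t) • (p - z)‖ ^ 2)
      + ⟪g, v⟫ - ((r ^ 2 - 3 * r) / 9 / t ^ 2 * (2 * ⟪p - z, v⟫)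
        - 2 * ((r ^ 2 - 3 * r) / 9) / t ^ 3 * ‖p - z‖ ^ 2)
      + ⟪v + (2 * r / 3 / t) • (p - z),
          (-(r / t) • v - g) + (2 * r / 3 / t) • v - (2 * r / 3 / t ^ 2) • (p - z)⟫
    = 2 * r / (3 * t) * (D + ⟪g, z - p⟫) + (2 * r ^ 3 - 18 * r) / (27 * t ^ 3) * ‖p - z‖ ^ 2 := by
  simp only [← real_inner_self_eq_norm_sq, inner_add_left, inner_add_right, inner_sub_left,
    inner_sub_right, inner_smul_left, inner_smul_right,
    RCLike.conj_to_real, real_inner_comm p v, real_inner_comm z v, real_inner_comm p g,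
    real_inner_comm z g, real_inner_comm z p, real_inner_comm v g]
  field_simp
  ring

end

theorem stmt_1_general {n : ℕ} (μ r : ℝ) (hμ : 0 < μ) (hr : 0 < r)
    (f : EuclideanSpace ℝ (Fin n) → ℝ)
    (f' : EuclideanSpace ℝ (Fin n) → EuclideanSpace ℝ (Fin n))
    (hf' : ∀ p, HasGradientAt f (f' p) p)
    (xstar : EuclideanSpace ℝ (Fin n))
    (x x' x'' : ℝ → EuclideanSpace ℝ (Fin n))
    (hx : ∀ t > (0:ℝ), HasDerivAt x (x' t) t)
    (hx' : ∀ t > (0:ℝ), HasDerivAt x' (x'' t) t)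
    (hode : ∀ t > (0:ℝ), x'' t + (r / t) • x' t + f' (x t) = 0)
    (E : ℝ → ℝ)
    (hE : ∀ t, E t
        = t ^ (2 * r / 3) * (f (x t) - f xstar - (r ^ 2 - 3 * r) / (9 * t ^ 2) * ‖x t - xstar‖ ^ 2)
          + 1 / 2 * t ^ (2 * r / 3) * ‖x' t + (2 * r / (3 * t)) • (x t - xstar)‖ ^ 2) :
    ∀ t, Real.sqrt (2 * r ^ 2 / (9 * μ)) ≤ t →
      HasDerivAt E
        (-(t ^ (2 * r / 3)) * (2 * r / (3 * t) * (f xstar - f (x t) - ⟪f' (x t), xstar - x t⟫)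
          - (2 * r ^ 3 - 18 * r) / (27 * t ^ 3) * ‖x t - xstar‖ ^ 2)) t := by
  intro t ht
  have ht0 : 0 < t := (Real.sqrt_pos.2 (by positivity)).trans_le ht
  have hacc : x'' t = -(r / t) • x' t - f' (x t) := by
    rw [← sub_eq_zero, ← hode t ht0]
    module
  simp only [div_mul_eq_div_div] at hE
  rw [funext hE]
  have hpow := Real.hasDerivAt_rpow_const (p := 2 * r / 3) (Or.inl ht0.ne')
  have hpot := (((hf' (x t)).comp_hasDerivAt (hx t ht0)).sub_const (f xstar)).sub
    (hasDerivAt_div_sq_mul_norm_sub_sq ((r ^ 2 - 3 * r) / 9) xstar (hx t ht0) ht0.ne')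
  have hkin := (hasDerivAt_add_div_smul_sub (2 * r / 3) xstar (hx t ht0) (hx' t ht0)
    ht0.ne').norm_sq
  refine ((hpow.mul hpot).add ((hpow.const_mul (1 / 2)).mul hkin)).congr_deriv ?_
  rw [hacc, Real.rpow_sub_one ht0.ne', Pi.sub_apply]
  linear_combination t ^ (2 * r / 3) * nag_lyapunov_deriv_identity r t (f (x t) - f xstar)
    (x t) xstar (x' t) (f' (x t)) ht0.ne'

/-- Lemma 3 (computation of `E'` for the NAG system `ẍ + (r/t)ẋ + ∇f(x) = 0`):
for `t ≥ T := √(2r²/(9μ))`, the Lyapunov function `E` has derivative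
`E'(t) = -t^(2r/3) * ((2r/(3t)) * (f_* - f(x t) - ⟪∇f(x t), x_* - x t⟫)
          - ((2r³ - 18r)/(27t³)) * ‖x t - x_*‖²)`. -/
theorem stmt_1 {n : ℕ} (μ r : ℝ) (hμ : 0 < μ) (hr : 0 < r)
    (f : EuclideanSpace ℝ (Fin n) → ℝ)
    (f' : EuclideanSpace ℝ (Fin n) → EuclideanSpace ℝ (Fin n))
    (hf' : ∀ p, HasGradientAt f (f' p) p)
    (hsc : ∀ p q, f q ≥ f p + ⟪f' p, q - p⟫ + μ / 2 * ‖q - p‖ ^ 2)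
    (xstar : EuclideanSpace ℝ (Fin n)) (hmin : ∀ p, f xstar ≤ f p)
    (x x' x'' : ℝ → EuclideanSpace ℝ (Fin n))
    (hx : ∀ t > (0:ℝ), HasDerivAt x (x' t) t)
    (hx' : ∀ t > (0:ℝ), HasDerivAt x' (x'' t) t)
    (hode : ∀ t > (0:ℝ), x'' t + (r / t) • x' t + f' (x t) = 0)
    (E : ℝ → ℝ)
    (hE : ∀ t, E t
        = t ^ (2 * r / 3) * (f (x t) - f xstar - (r ^ 2 - 3 * r) / (9 * t ^ 2) * ‖x t - xstar‖ ^ 2)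
          + 1 / 2 * t ^ (2 * r / 3) * ‖x' t + (2 * r / (3 * t)) • (x t - xstar)‖ ^ 2) :
    ∀ t, Real.sqrt (2 * r ^ 2 / (9 * μ)) ≤ t →
      HasDerivAt E
        (-(t ^ (2 * r / 3)) * (2 * r / (3 * t) * (f xstar - f (x t) - ⟪f' (x t), xstar - x t⟫)
          - (2 * r ^ 3 - 18 * r) / (27 * t ^ 3) * ‖x t - xstar‖ ^ 2)) t :=
  stmt_1_general μ r hμ hr f f' hf' xstar x x' x'' hx hx' hode E hE
end

section
/- Define y(t) = t^{2r/3}·(x(t) − x_*). Then for all t > 0, ẏ(t) = t^{2r/3}·( ẋ(t) + (2r/(3t))·(x(t) − x_*) ), and consequently ‖ẏ(t)‖ ≤ √(2·E(T)) · t^{r/3} for all t ≥ T := √(2r²/(9μ)). -/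
/-! Along the flow, the derivative of `E` is
`t^(2r/3 - 1) * ((2r/3) (f x - f_* - ⟪∇f x, x - x_*⟫) + (2r(r² - 9)/(27t²)) ‖x - x_*‖²)`.
Strong convexity bounds the first term by `-(μr/3) ‖x - x_*‖²`, so `E` decreases once
`9μt² ≥ 2r²`, i.e. for `t ≥ T`. There quadratic growth `f x - f_* ≥ (μ/2) ‖x - x_*‖²` also makes
the potential part of `E` nonnegative, hence `(1/2) t^(2r/3) ‖ẋ + (2r/(3t)) (x - x_*)‖² ≤ E t ≤ E T`,
and `‖ẏ‖ = t^(2r/3) ‖ẋ + (2r/(3t)) (x - x_*)‖` gives the bound. -/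

open scoped RealInnerProductSpace

variable {V : Type*} [NormedAddCommGroup V] [InnerProductSpace ℝ V]

theorem IsLocalMin.hasGradientAt_eq_zero [CompleteSpace V] {f : V → ℝ} {g p : V}
    (hmin : IsLocalMin f p) (hg : HasGradientAt f g p) : g = 0 := by
  simpa using hmin.hasFDerivAt_eq_zero hg.hasFDerivAt

section StrongConvexity

variable {f : V → ℝ} {f' : V → V} {μ : ℝ}

theorem sub_sub_inner_le_of_strongConvex
    (hsc : ∀ p q, f q ≥ f p + ⟪f' p, q - p⟫ + μ / 2 * ‖q - p‖ ^ 2) (p xs : V) :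
    f p - f xs - ⟪f' p, p - xs⟫ ≤ -(μ / 2) * ‖p - xs‖ ^ 2 := by
  have h := hsc p xs
  rw [← neg_sub p xs, inner_neg_right, norm_neg] at h
  linarith

theorem mul_sq_norm_sub_le_of_strongConvex
    (hsc : ∀ p q, f q ≥ f p + ⟪f' p, q - p⟫ + μ / 2 * ‖q - p‖ ^ 2) {xs : V} (hxs : f' xs = 0)
    (q : V) : μ / 2 * ‖q - xs‖ ^ 2 ≤ f q - f xs := by
  have h := hsc xs q
  rw [hxs, inner_zero_left] at h
  linarith

end StrongConvexity

theorem hasDerivAt_rpow_smul {u : ℝ → V} {u' : V} {p t : ℝ} (ht : t ≠ 0)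
    (hu : HasDerivAt u u' t) :
    HasDerivAt (fun s ↦ s ^ p • u s) (t ^ p • (u' + (p / t) • u t)) t := by
  refine ((Real.hasDerivAt_rpow_const (Or.inl ht)).smul hu).congr_deriv ?_
  rw [smul_add, smul_smul, Real.rpow_sub_one ht, mul_div_left_comm]

theorem norm_rpow_smul_le_sqrt {v : V} {p t M : ℝ} (ht : 0 < t) (h : t ^ p * ‖v‖ ^ 2 ≤ M) :
    ‖t ^ p • v‖ ≤ √M * t ^ (p / 2) := by
  have htp : 0 < t ^ p := by positivity
  calc ‖t ^ p • v‖ = √(t ^ p * (t ^ p * ‖v‖ ^ 2)) := by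
        rw [norm_smul, Real.norm_of_nonneg htp.le, ← mul_assoc, ← sq, ← mul_pow,
          Real.sqrt_sq (by positivity)]
    _ ≤ √(t ^ p * M) := by gcongr
    _ = √M * t ^ (p / 2) := by
        rw [Real.sqrt_mul htp.le, mul_comm, Real.sqrt_eq_rpow (t ^ p), ← Real.rpow_mul ht.le]
        ring_nf

noncomputable def lyapunov (f : V → ℝ) (xs : V) (r : ℝ) (x x' : ℝ → V) (t : ℝ) : ℝ :=
  t ^ (2 * r / 3) * (f (x t) - f xs - (r ^ 2 - 3 * r) / (9 * t ^ 2) * ‖x t - xs‖ ^ 2)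
    + 1 / 2 * t ^ (2 * r / 3) * ‖x' t + (2 * r / (3 * t)) • (x t - xs)‖ ^ 2

theorem hasDerivAt_lyapunov [CompleteSpace V] {f : V → ℝ} {xs g a : V} {r t : ℝ}
    {x x' : ℝ → V} (ht : t ≠ 0) (hf : HasGradientAt f g (x t))
    (hx : HasDerivAt x (x' t) t) (hx' : HasDerivAt x' a t) (hode : a + (r / t) • x' t + g = 0) :
    HasDerivAt (lyapunov f xs r x x') (t ^ (2 * r / 3) / t *
      (2 * r / 3 * (f (x t) - f xs - ⟪g, x t - xs⟫)
        + 2 * r * (r ^ 2 - 9) / 27 / t ^ 2 * ‖x t - xs‖ ^ 2)) t := by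
  have hu : HasDerivAt (fun s ↦ x s - xs) (x' t) t := hx.sub_const xs
  have hpow : HasDerivAt (fun s : ℝ ↦ s ^ (2 * r / 3)) (2 * r / 3 * (t ^ (2 * r / 3) / t)) t := by
    simpa [Real.rpow_sub_one ht] using Real.hasDerivAt_rpow_const (p := 2 * r / 3) (Or.inl ht)
  have hfx : HasDerivAt (fun s ↦ f (x s) - f xs) ⟪g, x' t⟫ t := by
    simpa using (hf.hasFDerivAt.comp_hasDerivAt t hx).sub_const (f xs)
  have hcoef : HasDerivAt (fun s : ℝ ↦ (r ^ 2 - 3 * r) / (9 * s ^ 2))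
      (-(2 * (r ^ 2 - 3 * r)) / (9 * t ^ 3)) t := by
    refine ((hasDerivAt_const t _).div ((hasDerivAt_pow 2 t).const_mul 9)
      (by positivity)).congr_deriv ?_
    field_simp
    ring
  have hdamp : HasDerivAt (fun s : ℝ ↦ 2 * r / (3 * s)) (-(2 * r) / (3 * t ^ 2)) t := by
    refine ((hasDerivAt_const t _).div ((hasDerivAt_id' t).const_mul 3)
      (by simpa using ht)).congr_deriv ?_
    field_simp
    ring
  have hv := hx'.add (hdamp.smul hu)
  have hA := hpow.mul (hfx.sub (hcoef.mul hu.norm_sq))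
  have hB := (hpow.const_mul (1 / 2 : ℝ)).mul hv.norm_sq
  refine (hA.add hB).congr_deriv ?_
  have ha : a = -((r / t) • x' t) - g := by linear_combination (norm := module) hode
  rw [ha]
  simp only [Pi.add_apply, Pi.sub_apply, Pi.mul_apply, Pi.smul_apply']
  generalize x t - xs = u
  generalize x' t = A
  simp only [norm_add_sq_real, norm_smul, inner_add_left, inner_add_right, inner_sub_right,
    inner_neg_right, real_inner_smul_left, real_inner_smul_right, real_inner_self_eq_norm_sq,
    mul_pow, Real.norm_eq_abs, sq_abs, real_inner_comm u, real_inner_comm A g]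
  field_simp
  ring

theorem two_mul_sq_le_of_sqrt_le {μ r t : ℝ} (hμ : 0 < μ) (h : √(2 * r ^ 2 / (9 * μ)) ≤ t) :
    2 * r ^ 2 ≤ 9 * μ * t ^ 2 := by
  have h := (Real.sqrt_le_iff.mp h).2
  rw [div_le_iff₀ (by positivity)] at h
  linarith

theorem antitoneOn_lyapunov [CompleteSpace V] {f : V → ℝ} {f' : V → V} {xs : V} {μ r T : ℝ}
    {x x' x'' : ℝ → V} (hr : 0 ≤ r) (hf' : ∀ p, HasGradientAt f (f' p) p)
    (hsc : ∀ p q, f q ≥ f p + ⟪f' p, q - p⟫ + μ / 2 * ‖q - p‖ ^ 2)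
    (hx : ∀ t > (0:ℝ), HasDerivAt x (x' t) t) (hx' : ∀ t > (0:ℝ), HasDerivAt x' (x'' t) t)
    (hode : ∀ t > (0:ℝ), x'' t + (r / t) • x' t + f' (x t) = 0)
    (hT : 0 < T) (hTμ : 2 * r ^ 2 ≤ 9 * μ * T ^ 2) :
    AntitoneOn (lyapunov f xs r x x') (Set.Ici T) := by
  have hderiv : ∀ t ∈ Set.Ici T, HasDerivAt (lyapunov f xs r x x') (t ^ (2 * r / 3) / t *
      (2 * r / 3 * (f (x t) - f xs - ⟪f' (x t), x t - xs⟫)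
        + 2 * r * (r ^ 2 - 9) / 27 / t ^ 2 * ‖x t - xs‖ ^ 2)) t := fun t ht ↦
    have ht : 0 < t := hT.trans_le ht
    hasDerivAt_lyapunov ht.ne' (hf' _) (hx t ht) (hx' t ht) (hode t ht)
  refine antitoneOn_of_hasDerivWithinAt_nonpos (convex_Ici T)
    (fun t ht ↦ (hderiv t ht).continuousAt.continuousWithinAt)
    (fun t ht ↦ (hderiv t (interior_subset ht)).hasDerivWithinAt) fun t ht ↦ ?_
  rw [interior_Ici] at ht
  have htpos : 0 < t := hT.trans ht
  have hμ : 0 ≤ μ := by nlinarith [sq_nonneg r, pow_pos hT 2]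
  have htμ : 2 * r ^ 2 ≤ 9 * μ * t ^ 2 :=
    hTμ.trans (mul_le_mul_of_nonneg_left (pow_le_pow_left₀ hT.le ht.le 2) (by positivity))
  have hc : 0 ≤ ‖x t - xs‖ ^ 2 := by positivity
  have hgap := sub_sub_inner_le_of_strongConvex hsc (x t) xs
  have hquad : 2 * r * (r ^ 2 - 9) / 27 / t ^ 2 * ‖x t - xs‖ ^ 2 ≤ μ * r / 3 * ‖x t - xs‖ ^ 2 := by
    rw [div_mul_eq_mul_div, div_le_iff₀ (by positivity)]
    nlinarith [mul_le_mul_of_nonneg_left htμ (mul_nonneg hr hc), mul_nonneg hr hc]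
  refine mul_nonpos_of_nonneg_of_nonpos (by positivity) ?_
  nlinarith [mul_le_mul_of_nonneg_left hgap (by positivity : (0:ℝ) ≤ 2 * r / 3)]

theorem half_mul_sq_norm_le_lyapunov {f : V → ℝ} {f' : V → V} {xs : V} {μ r t : ℝ}
    {x x' : ℝ → V} (hr : 0 ≤ r)
    (hsc : ∀ p q, f q ≥ f p + ⟪f' p, q - p⟫ + μ / 2 * ‖q - p‖ ^ 2) (hxs : f' xs = 0)
    (ht : 0 < t) (htμ : 2 * r ^ 2 ≤ 9 * μ * t ^ 2) :
    1 / 2 * t ^ (2 * r / 3) * ‖x' t + (2 * r / (3 * t)) • (x t - xs)‖ ^ 2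
      ≤ lyapunov f xs r x x' t := by
  have hcoef : (r ^ 2 - 3 * r) / (9 * t ^ 2) ≤ μ / 2 := by
    rw [div_le_iff₀ (by positivity)]
    nlinarith
  have hgrowth := mul_sq_norm_sub_le_of_strongConvex hsc hxs (x t)
  have hpot : 0 ≤ f (x t) - f xs - (r ^ 2 - 3 * r) / (9 * t ^ 2) * ‖x t - xs‖ ^ 2 := by
    nlinarith [mul_le_mul_of_nonneg_right hcoef (sq_nonneg ‖x t - xs‖)]
  unfold lyapunov
  nlinarith [mul_nonneg (by positivity : (0:ℝ) ≤ t ^ (2 * r / 3)) hpot]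

/-- Equations (19)–(20) in the proof of Lemma 5: with `y t = t^(2r/3) • (x t - x_*)`,
`ẏ(t) = t^(2r/3) • (ẋ(t) + (2r/(3t)) • (x t - x_*))` for `t > 0`, and
`‖ẏ(t)‖ ≤ √(2 E(T)) * t^(r/3)` for `t ≥ T := √(2r²/(9μ))`. -/
theorem stmt_6
{n : ℕ} (μ r : ℝ) (hμ : 0 < μ) (hr : 0 < r)
    (f : EuclideanSpace ℝ (Fin n) → ℝ)
    (f' : EuclideanSpace ℝ (Fin n) → EuclideanSpace ℝ (Fin n))
    (hf' : ∀ p, HasGradientAt f (f' p) p)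
    (hsc : ∀ p q, f q ≥ f p + ⟪f' p, q - p⟫ + μ / 2 * ‖q - p‖ ^ 2)
    (xstar : EuclideanSpace ℝ (Fin n)) (hmin : ∀ p, f xstar ≤ f p)
    (x x' x'' : ℝ → EuclideanSpace ℝ (Fin n))
    (hx : ∀ t > (0:ℝ), HasDerivAt x (x' t) t)
    (hx' : ∀ t > (0:ℝ), HasDerivAt x' (x'' t) t)
    (hode : ∀ t > (0:ℝ), x'' t + (r / t) • x' t + f' (x t) = 0)
(E : ℝ → ℝ)
    (hE : ∀ t, E t
        = t ^ (2 * r / 3) * (f (x t) - f xstar - (r ^ 2 - 3 * r) / (9 * t ^ 2) * ‖x t - xstar‖ ^ 2)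
          + 1 / 2 * t ^ (2 * r / 3) * ‖x' t + (2 * r / (3 * t)) • (x t - xstar)‖ ^ 2) :
    (∀ t > (0:ℝ), HasDerivAt (fun s : ℝ => s ^ (2 * r / 3) • (x s - xstar))
      (t ^ (2 * r / 3) • (x' t + (2 * r / (3 * t)) • (x t - xstar))) t) ∧
    (∀ t, Real.sqrt (2 * r ^ 2 / (9 * μ)) ≤ t →
      ‖t ^ (2 * r / 3) • (x' t + (2 * r / (3 * t)) • (x t - xstar))‖
        ≤ Real.sqrt (2 * E (Real.sqrt (2 * r ^ 2 / (9 * μ)))) * t ^ (r / 3)) := by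
  have hlyap : E = lyapunov f xstar r x x' := funext hE
  refine ⟨fun t ht ↦ ?_, fun t hTt ↦ ?_⟩
  · simpa only [div_div] using
      hasDerivAt_rpow_smul (p := 2 * r / 3) ht.ne' ((hx t ht).sub_const xstar)
  set T := √(2 * r ^ 2 / (9 * μ))
  have hT : 0 < T := Real.sqrt_pos.mpr (by positivity)
  have ht : 0 < t := hT.trans_le hTt
  have hxstar : f' xstar = 0 :=
    ((isMinOn_univ_iff.mpr hmin).isLocalMin Filter.univ_mem).hasGradientAt_eq_zero (hf' xstar)
  have hbound : t ^ (2 * r / 3) * ‖x' t + (2 * r / (3 * t)) • (x t - xstar)‖ ^ 2 ≤ 2 * E T := by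
    have hkinetic := half_mul_sq_norm_le_lyapunov (x := x) (x' := x') hr.le hsc hxstar ht
      (two_mul_sq_le_of_sqrt_le hμ hTt)
    have hdecay := antitoneOn_lyapunov (xs := xstar) hr.le hf' hsc hx hx' hode hT
      (two_mul_sq_le_of_sqrt_le hμ le_rfl) Set.self_mem_Ici hTt hTt
    rw [hlyap]
    linarith
  simpa only [show 2 * r / 3 / 2 = r / 3 by ring] using norm_rpow_smul_le_sqrt ht hbound
end

section
/- For all t ≥ T := (2r²/(9μ))^{1/(2α)}, the derivative of E satisfies E'(t) ≤ − exp((2/3)·(r/(1−α))·t^{1−α}) · (rα(1+α)·t^{−2}/(3·t^{α})) · ‖x(t) − x_*‖² ≤ 0; in particular E is non-increasing on [T, ∞). -/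
/-!
With `a(t) = (2/3) r t^(-α)` the equation reads `ẍ + (3/2) a ẋ + ∇f(x) = 0`, the exponential
weight `c` of `E` solves `ċ = a c`, and the coefficient of `‖x - x_*‖²` in `E` is `a²/4 + ȧ/2`.
For any damping of this shape, differentiating `E` and substituting the equation cancels every
term containing `ẋ`, leaving
`Ė = c (a (f(x) - f_* - ⟪∇f(x), x - x_*⟫) + (a³/4 - ä/2) ‖x - x_*‖²)`.
Strong convexity bounds the first bracket by `-(μ/2) ‖x - x_*‖²`, and `t ≥ T` means `a² ≤ 2μ`,
so `Ė ≤ -c (ä/2) ‖x - x_*‖²` with `ä/2 = rα(1+α) t^(-α-2)/3 ≥ 0`.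
-/

open scoped RealInnerProductSpace

section DampedLyapunov

variable {F : Type*} [NormedAddCommGroup F] [InnerProductSpace ℝ F]

noncomputable def dampedLyapunov (f : F → ℝ) (xstar : F) (a a' c : ℝ → ℝ) (x x' : ℝ → F)
    (t : ℝ) : ℝ :=
  c t * (f (x t) - f xstar - (a t ^ 2 / 4 + a' t / 2) * ‖x t - xstar‖ ^ 2)
    + 1 / 2 * c t * ‖x' t + a t • (x t - xstar)‖ ^ 2

theorem hasDerivAt_dampedLyapunov [CompleteSpace F] {f : F → ℝ} {g xstar x'' : F} {x x' : ℝ → F}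
    {a a' c : ℝ → ℝ} {a'' t : ℝ} (hf : HasGradientAt f g (x t))
    (hx : HasDerivAt x (x' t) t) (hx' : HasDerivAt x' x'' t)
    (hode : x'' + (3 / 2 * a t) • x' t + g = 0)
    (ha : HasDerivAt a (a' t) t) (ha' : HasDerivAt a' a'' t) (hc : HasDerivAt c (a t * c t) t) :
    HasDerivAt (dampedLyapunov f xstar a a' c x x')
      (c t * (a t * (f (x t) - f xstar - ⟪g, x t - xstar⟫)
        + (a t ^ 3 / 4 - a'' / 2) * ‖x t - xstar‖ ^ 2)) t := by
  have hu : HasDerivAt (fun s => x s - xstar) (x' t) t := hx.sub_const xstar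
  have hfx : HasDerivAt (fun s => f (x s)) ⟪g, x' t⟫ t := by
    have h := hf.hasFDerivAt.comp_hasDerivAt t hx
    simp only [InnerProductSpace.toDual_apply_apply] at h
    exact h
  have hb : HasDerivAt (fun s => a s ^ 2 / 4 + a' s / 2) (a t * a' t / 2 + a'' / 2) t :=
    (((ha.pow 2).div_const 4).add (ha'.div_const 2)).congr_deriv (by push_cast; ring)
  have hw : HasDerivAt (fun s => ‖x' s + a s • (x s - xstar)‖ ^ 2)
      (2 * ⟪x' t + a t • (x t - xstar), x'' + (a t • x' t + a' t • (x t - xstar))⟫) t :=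
    (hx'.add (ha.smul hu)).norm_sq
  have hsum := (hc.mul ((hfx.sub_const (f xstar)).sub (hb.mul hu.norm_sq))).add
    ((hc.const_mul (1 / 2)).mul hw)
  refine hsum.congr_deriv ?_
  rw [show x'' = -((3 / 2 * a t) • x' t) - g by
    rw [← sub_eq_zero, ← hode]; abel]
  simp only [Pi.sub_apply, Pi.mul_apply]
  generalize x t - xstar = u
  simp only [norm_add_sq_real, norm_smul, Real.norm_eq_abs, mul_pow, sq_abs, inner_add_left,
    inner_add_right, inner_sub_right, inner_neg_right, real_inner_smul_left,
    real_inner_smul_right, real_inner_self_eq_norm_sq, real_inner_comm (x' t) u,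
    real_inner_comm (x' t) g, real_inner_comm u g]
  ring

theorem dampedLyapunov_deriv_le {f : F → ℝ} {g p q : F} {μ A A'' C : ℝ}
    (hsc : f q ≥ f p + ⟪g, q - p⟫ + μ / 2 * ‖q - p‖ ^ 2)
    (hC : 0 ≤ C) (hA : 0 ≤ A) (hAμ : A ^ 2 ≤ 2 * μ) :
    C * (A * (f p - f q - ⟪g, p - q⟫) + (A ^ 3 / 4 - A'' / 2) * ‖p - q‖ ^ 2)
      ≤ -(C * (A'' / 2) * ‖p - q‖ ^ 2) := by
  rw [← neg_sub p q, inner_neg_right, norm_neg] at hsc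
  have hconv : A * (f p - f q - ⟪g, p - q⟫) ≤ A * (-(μ / 2 * ‖p - q‖ ^ 2)) :=
    mul_le_mul_of_nonneg_left (by linarith) hA
  have hbracket : A * (f p - f q - ⟪g, p - q⟫) + A ^ 3 / 4 * ‖p - q‖ ^ 2 ≤ 0 := by
    nlinarith [mul_nonneg (mul_nonneg hA (sub_nonneg.2 hAμ)) (sq_nonneg ‖p - q‖)]
  nlinarith [mul_nonpos_of_nonneg_of_nonpos hC hbracket]

end DampedLyapunov

section PowerDamping

variable {F : Type*} [NormedAddCommGroup F] [InnerProductSpace ℝ F] {r α t : ℝ}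

theorem hasDerivAt_exp_rpow_one_sub (hα : α ≠ 1) (ht : t ≠ 0) :
    HasDerivAt (fun s => Real.exp (2 / 3 * (r / (1 - α)) * s ^ (1 - α)))
      (2 / 3 * r * t ^ (-α) * Real.exp (2 / 3 * (r / (1 - α)) * t ^ (1 - α))) t := by
  refine (((Real.hasDerivAt_rpow_const (p := 1 - α) (Or.inl ht)).const_mul _).exp).congr_deriv ?_
  rw [sub_sub_cancel_left, mul_comm, div_eq_mul_inv]
  field_simp [sub_ne_zero.mpr hα.symm]

theorem powerDamping_coeff_eq (ht : 0 < t) :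
    (r ^ 2 * t ^ (-α) - 3 * r * α * t⁻¹) / (9 * t ^ α)
      = (2 / 3 * r * t ^ (-α)) ^ 2 / 4 + 2 / 3 * r * (-α * t ^ (-α - 1)) / 2 := by
  rw [Real.rpow_sub ht, Real.rpow_neg ht.le, Real.rpow_one]
  field_simp
  ring

theorem powerDamping_second_deriv_half_eq (ht : 0 < t) :
    2 / 3 * r * (-α * ((-α - 1) * t ^ (-α - 1 - 1))) / 2
      = r * α * (1 + α) * t ^ (-2 : ℝ) / (3 * t ^ α) := by
  rw [show -α - 1 - 1 = -2 + -α by ring, Real.rpow_add ht, Real.rpow_neg ht.le α]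
  field_simp
  ring

theorem sq_powerDamping_le_of_rpow_inv_le {μ : ℝ} (hμ : 0 < μ) (hα : 0 < α) (ht : 0 < t)
    (hT : (2 * r ^ 2 / (9 * μ)) ^ (1 / (2 * α)) ≤ t) :
    (2 / 3 * r * t ^ (-α)) ^ 2 ≤ 2 * μ := by
  rw [one_div, Real.rpow_inv_le_iff_of_pos (by positivity) ht.le (by positivity),
    mul_comm 2 α, Real.rpow_mul ht.le, Real.rpow_two, div_le_iff₀ (by positivity)] at hT
  rw [Real.rpow_neg ht.le, mul_pow, inv_pow]
  have := Real.rpow_pos_of_pos ht α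
  rw [← div_eq_mul_inv, div_le_iff₀ (by positivity)]
  nlinarith

noncomputable def powerDampedLyapunov (f : F → ℝ) (xstar : F) (r α : ℝ) (x x' : ℝ → F) :
    ℝ → ℝ :=
  dampedLyapunov f xstar (fun s => 2 / 3 * r * s ^ (-α)) (fun s => 2 / 3 * r * (-α * s ^ (-α - 1)))
    (fun s => Real.exp (2 / 3 * (r / (1 - α)) * s ^ (1 - α))) x x'

theorem powerDampedLyapunov_eq {f : F → ℝ} {xstar : F} {x x' : ℝ → F} (ht : 0 < t) :
    powerDampedLyapunov f xstar r α x x' t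
      = Real.exp (2 / 3 * (r / (1 - α)) * t ^ (1 - α))
          * (f (x t) - f xstar
              - (r ^ 2 * t ^ (-α) - 3 * r * α * t⁻¹) / (9 * t ^ α) * ‖x t - xstar‖ ^ 2)
        + 1 / 2 * Real.exp (2 / 3 * (r / (1 - α)) * t ^ (1 - α))
          * ‖x' t + (2 / 3 * r * t ^ (-α)) • (x t - xstar)‖ ^ 2 := by
  rw [powerDampedLyapunov, dampedLyapunov, powerDamping_coeff_eq ht]

theorem exists_hasDerivAt_powerDampedLyapunov_le [CompleteSpace F] {f : F → ℝ} {g xstar x'' : F}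
    {x x' : ℝ → F} {μ : ℝ} (hμ : 0 < μ) (hr : 0 < r) (hα0 : 0 < α) (hα1 : α < 1) (ht : 0 < t)
    (hT : (2 * r ^ 2 / (9 * μ)) ^ (1 / (2 * α)) ≤ t) (hf : HasGradientAt f g (x t))
    (hsc : f xstar ≥ f (x t) + ⟪g, xstar - x t⟫ + μ / 2 * ‖xstar - x t‖ ^ 2)
    (hx : HasDerivAt x (x' t) t) (hx' : HasDerivAt x' x'' t)
    (hode : x'' + (r / t ^ α) • x' t + g = 0) :
    ∃ d, HasDerivAt (powerDampedLyapunov f xstar r α x x') d t ∧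
      d ≤ -Real.exp (2 / 3 * (r / (1 - α)) * t ^ (1 - α))
          * (r * α * (1 + α) * t ^ (-2 : ℝ) / (3 * t ^ α)) * ‖x t - xstar‖ ^ 2 := by
  have hda := (Real.hasDerivAt_rpow_const (p := -α) (Or.inl ht.ne')).const_mul (2 / 3 * r)
  have hda' := ((Real.hasDerivAt_rpow_const (p := -α - 1) (Or.inl ht.ne')).const_mul
    (-α)).const_mul (2 / 3 * r)
  have hode' : x'' + (3 / 2 * (2 / 3 * r * t ^ (-α))) • x' t + g = 0 := by
    rw [← hode, Real.rpow_neg ht.le, div_eq_mul_inv]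
    ring_nf
  refine ⟨_, hasDerivAt_dampedLyapunov hf hx hx' hode' hda hda'
    (hasDerivAt_exp_rpow_one_sub hα1.ne ht.ne'), ?_⟩
  refine (dampedLyapunov_deriv_le hsc (Real.exp_pos _).le (by positivity)
    (sq_powerDamping_le_of_rpow_inv_le hμ hα0 ht hT)).trans_eq ?_
  rw [← powerDamping_second_deriv_half_eq ht]
  ring

theorem neg_exp_mul_decayRate_mul_nonpos {G : Type*} [NormedAddCommGroup G] (hr : 0 < r)
    (hα : 0 < α) (ht : 0 < t) (u : G) :
    -Real.exp (2 / 3 * (r / (1 - α)) * t ^ (1 - α))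
      * (r * α * (1 + α) * t ^ (-2 : ℝ) / (3 * t ^ α)) * ‖u‖ ^ 2 ≤ 0 := by
  have : 0 < 1 + α := by linarith
  have := Real.rpow_pos_of_pos ht α
  have := Real.rpow_pos_of_pos ht (-2)
  rw [neg_mul, neg_mul, neg_nonpos]
  positivity

end PowerDamping

theorem stmt_11_general
{n : ℕ} (μ r α : ℝ) (hμ : 0 < μ) (hr : 0 < r) (hα0 : 0 < α) (hα1 : α < 1)
    (f : EuclideanSpace ℝ (Fin n) → ℝ)
    (f' : EuclideanSpace ℝ (Fin n) → EuclideanSpace ℝ (Fin n))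
    (hf' : ∀ p, HasGradientAt f (f' p) p)
    (hsc : ∀ p q, f q ≥ f p + ⟪f' p, q - p⟫ + μ / 2 * ‖q - p‖ ^ 2)
    (xstar : EuclideanSpace ℝ (Fin n))
    (x x' x'' : ℝ → EuclideanSpace ℝ (Fin n))
    (hx : ∀ t > (0:ℝ), HasDerivAt x (x' t) t)
    (hx' : ∀ t > (0:ℝ), HasDerivAt x' (x'' t) t)
    (hode : ∀ t > (0:ℝ), x'' t + (r / t ^ α) • x' t + f' (x t) = 0)
(E : ℝ → ℝ)
    (hE : ∀ t, E t
        = Real.exp (2 / 3 * (r / (1 - α)) * t ^ (1 - α))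
            * (f (x t) - f xstar
                - (r ^ 2 * t ^ (-α) - 3 * r * α * t⁻¹) / (9 * t ^ α) * ‖x t - xstar‖ ^ 2)
          + 1 / 2 * Real.exp (2 / 3 * (r / (1 - α)) * t ^ (1 - α))
            * ‖x' t + (2 / 3 * r * t ^ (-α)) • (x t - xstar)‖ ^ 2) :
    (∀ t, (2 * r ^ 2 / (9 * μ)) ^ (1 / (2 * α)) ≤ t →
      deriv E t ≤ -Real.exp (2 / 3 * (r / (1 - α)) * t ^ (1 - α))
          * (r * α * (1 + α) * t ^ (-2 : ℝ) / (3 * t ^ α)) * ‖x t - xstar‖ ^ 2 ∧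
      -Real.exp (2 / 3 * (r / (1 - α)) * t ^ (1 - α))
          * (r * α * (1 + α) * t ^ (-2 : ℝ) / (3 * t ^ α)) * ‖x t - xstar‖ ^ 2 ≤ 0) ∧
    AntitoneOn E (Set.Ici ((2 * r ^ 2 / (9 * μ)) ^ (1 / (2 * α)))) := by
  have hT : 0 < (2 * r ^ 2 / (9 * μ)) ^ (1 / (2 * α)) := by positivity
  have hE_eq : ∀ s > (0:ℝ), E s = powerDampedLyapunov f xstar r α x x' s := fun s hs =>
    (hE s).trans (powerDampedLyapunov_eq hs).symm
  have hderiv : ∀ t, (2 * r ^ 2 / (9 * μ)) ^ (1 / (2 * α)) ≤ t → ∃ d, HasDerivAt E d t ∧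
      d ≤ -Real.exp (2 / 3 * (r / (1 - α)) * t ^ (1 - α))
          * (r * α * (1 + α) * t ^ (-2 : ℝ) / (3 * t ^ α)) * ‖x t - xstar‖ ^ 2 := by
    intro t hTt
    have ht : 0 < t := hT.trans_le hTt
    obtain ⟨d, hd, hle⟩ := exists_hasDerivAt_powerDampedLyapunov_le hμ hr hα0 hα1 ht hTt
      (hf' (x t)) (hsc _ _) (hx t ht) (hx' t ht) (hode t ht)
    exact ⟨d, hd.congr_of_eventuallyEq (Filter.eventually_of_mem (Ioi_mem_nhds ht) hE_eq), hle⟩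
  have hbound := fun t (ht : 0 < t) => neg_exp_mul_decayRate_mul_nonpos hr hα0 ht (x t - xstar)
  refine ⟨fun t hTt => ?_, ?_⟩
  · obtain ⟨d, hd, hle⟩ := hderiv t hTt
    exact ⟨hd.deriv ▸ hle, hbound t (hT.trans_le hTt)⟩
  refine antitoneOn_of_deriv_nonpos (convex_Ici _) (fun t hTt => ?_) (fun t hTt => ?_)
    (fun t hTt => ?_)
  · obtain ⟨d, hd, -⟩ := hderiv t hTt
    exact hd.continuousAt.continuousWithinAt
  · rw [interior_Ici] at hTt
    obtain ⟨d, hd, -⟩ := hderiv t hTt.le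
    exact hd.differentiableAt.differentiableWithinAt
  · rw [interior_Ici] at hTt
    obtain ⟨d, hd, hle⟩ := hderiv t hTt.le
    exact hd.deriv ▸ hle.trans (hbound t (hT.trans hTt))

/-- Lemma 7 (descent of the Lyapunov function for `ẍ + (r/t^α)ẋ + ∇f(x) = 0`):
for `t ≥ T := (2r²/(9μ))^(1/(2α))`,
`E'(t) ≤ -exp((2/3)(r/(1-α)) t^(1-α)) * (rα(1+α) t^(-2)/(3 t^α)) ‖x t - x_*‖² ≤ 0`;
in particular `E` is non-increasing on `[T, ∞)`. -/
theorem stmt_11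
{n : ℕ} (μ r α : ℝ) (hμ : 0 < μ) (hr : 0 < r) (hα0 : 0 < α) (hα1 : α < 1)
    (f : EuclideanSpace ℝ (Fin n) → ℝ)
    (f' : EuclideanSpace ℝ (Fin n) → EuclideanSpace ℝ (Fin n))
    (hf' : ∀ p, HasGradientAt f (f' p) p)
    (hsc : ∀ p q, f q ≥ f p + ⟪f' p, q - p⟫ + μ / 2 * ‖q - p‖ ^ 2)
    (xstar : EuclideanSpace ℝ (Fin n)) (hmin : ∀ p, f xstar ≤ f p)
    (x x' x'' : ℝ → EuclideanSpace ℝ (Fin n))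
    (hx : ∀ t > (0:ℝ), HasDerivAt x (x' t) t)
    (hx' : ∀ t > (0:ℝ), HasDerivAt x' (x'' t) t)
    (hode : ∀ t > (0:ℝ), x'' t + (r / t ^ α) • x' t + f' (x t) = 0)
(E : ℝ → ℝ)
    (hE : ∀ t, E t
        = Real.exp (2 / 3 * (r / (1 - α)) * t ^ (1 - α))
            * (f (x t) - f xstar
                - (r ^ 2 * t ^ (-α) - 3 * r * α * t⁻¹) / (9 * t ^ α) * ‖x t - xstar‖ ^ 2)
          + 1 / 2 * Real.exp (2 / 3 * (r / (1 - α)) * t ^ (1 - α))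
            * ‖x' t + (2 / 3 * r * t ^ (-α)) • (x t - xstar)‖ ^ 2) :
    (∀ t, (2 * r ^ 2 / (9 * μ)) ^ (1 / (2 * α)) ≤ t →
      deriv E t ≤ -Real.exp (2 / 3 * (r / (1 - α)) * t ^ (1 - α))
          * (r * α * (1 + α) * t ^ (-2 : ℝ) / (3 * t ^ α)) * ‖x t - xstar‖ ^ 2 ∧
      -Real.exp (2 / 3 * (r / (1 - α)) * t ^ (1 - α))
          * (r * α * (1 + α) * t ^ (-2 : ℝ) / (3 * t ^ α)) * ‖x t - xstar‖ ^ 2 ≤ 0) ∧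
    AntitoneOn E (Set.Ici ((2 * r ^ 2 / (9 * μ)) ^ (1 / (2 * α)))) :=
  stmt_11_general μ r α hμ hr hα0 hα1 f f' hf' hsc xstar x x' x'' hx hx' hode E hE
end

section
/- For all t ≥ T := (2r²/(9μ))^{1/(2α)}, one has (1/2)·exp((2/3)·(r/(1−α))·t^{1−α})·‖ẋ(t) + (2/3)·r·t^{−α}·(x(t) − x_*)‖² ≤ E(T). -/
/-!
`E` is a Lyapunov function for `ẍ + (3/2) a ẋ + ∇f(x) = 0` with `a(t) = (2/3) r t^(-α)`:
along a trajectory, `Ė = e^(∫a) (a (f(x) - f_* - ⟪∇f(x), x - x_*⟫) + (a³/4 - ä/2) ‖x - x_*‖²)`,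
which strong convexity and `ä ≥ 0` bound by `e^(∫a) a (a²/4 - μ/2) ‖x - x_*‖²`. This is
nonpositive as soon as `a² ≤ 2μ`, i.e. for `t ≥ T`. For such `t` the potential part of `E` is
nonnegative as well, since its coefficient `a²/4 + ȧ/2` is at most `μ/2` while
`f(x) - f_* ≥ (μ/2) ‖x - x_*‖²`; so the kinetic part at `t` is at most `E(t) ≤ E(T)`.
-/

open scoped RealInnerProductSpace

section DampedEnergy

variable {H : Type*} [NormedAddCommGroup H] [InnerProductSpace ℝ H]

theorem IsLocalMin.hasGradientAt_eq_zero_s14 [CompleteSpace H] {f : H → ℝ} {g a : H}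
    (h : IsLocalMin f a) (hf : HasGradientAt f g a) : g = 0 :=
  (LinearIsometryEquiv.map_eq_zero_iff _).mp (h.hasFDerivAt_eq_zero hf.hasFDerivAt)

theorem quadratic_growth_of_isMin [CompleteSpace H] {f : H → ℝ} {g xstar : H} {μ : ℝ}
    (hf : HasGradientAt f g xstar) (hmin : ∀ p, f xstar ≤ f p)
    (hsc : ∀ q, f q ≥ f xstar + ⟪g, q - xstar⟫ + μ / 2 * ‖q - xstar‖ ^ 2) (p : H) :
    μ / 2 * ‖p - xstar‖ ^ 2 ≤ f p - f xstar := by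
  have hg : g = 0 := IsLocalMin.hasGradientAt_eq_zero_s14 (.of_forall hmin) hf
  have h := hsc p
  rw [hg, inner_zero_left] at h
  linarith

/-- The energy `E` of the statement for a general damping `a` with derivative `da` and weight
`w = exp ∫ a`; its potential coefficient is `a²/4 + ȧ/2`. -/
noncomputable def dampedEnergy (f : H → ℝ) (xstar : H) (w a da : ℝ → ℝ) (x x' : ℝ → H) (t : ℝ) : ℝ :=
  w t * (f (x t) - f xstar - (a t ^ 2 / 4 + da t / 2) * ‖x t - xstar‖ ^ 2)
    + 1 / 2 * w t * ‖x' t + a t • (x t - xstar)‖ ^ 2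

theorem hasDerivAt_dampedEnergy [CompleteSpace H] {f : H → ℝ} {g xstar : H}
    {w a da : ℝ → ℝ} {dda t : ℝ} {x x' : ℝ → H}
    (hf : HasGradientAt f g (x t)) (hw : HasDerivAt w (a t * w t) t)
    (ha : HasDerivAt a (da t) t) (hda : HasDerivAt da dda t)
    (hx : HasDerivAt x (x' t) t) (hx' : HasDerivAt x' (-(3 / 2 * a t) • x' t - g) t) :
    HasDerivAt (dampedEnergy f xstar w a da x x')
      (w t * (a t * (f (x t) - f xstar - ⟪g, x t - xstar⟫)
        + (a t ^ 3 / 4 - dda / 2) * ‖x t - xstar‖ ^ 2)) t := by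
  have hu : HasDerivAt (fun s ↦ x s - xstar) (x' t) t := hx.sub_const xstar
  have hfx : HasDerivAt (fun s ↦ f (x s)) ⟪g, x' t⟫ t := by
    have h := hf.hasFDerivAt.comp_hasDerivAt t hx
    rwa [InnerProductSpace.toDual_apply_apply] at h
  have hc : HasDerivAt (fun s ↦ a s ^ 2 / 4 + da s / 2) (a t * da t / 2 + dda / 2) t :=
    (((ha.pow 2).div_const 4).add (hda.div_const 2)).congr_deriv (by ring)
  have hv : HasDerivAt (fun s ↦ x' s + a s • (x s - xstar))
      (-(3 / 2 * a t) • x' t - g + (a t • x' t + da t • (x t - xstar))) t :=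
    hx'.add (ha.smul hu)
  -- With damping `3a/2` and coefficient `a²/4 + ȧ/2`, the terms in `‖ẋ‖²`, `⟪∇f, ẋ⟫` and
  -- `⟪x - x_*, ẋ⟫` cancel.
  refine ((hw.mul ((hfx.sub_const (f xstar)).sub (hc.mul hu.norm_sq))).add
    ((hw.const_mul (1 / 2)).mul hv.norm_sq)).congr_deriv ?_
  simp only [Pi.sub_apply, Pi.mul_apply]
  generalize x t - xstar = u
  simp only [← real_inner_self_eq_norm_sq, inner_add_left, inner_add_right, inner_sub_right,
    real_inner_smul_left, real_inner_smul_right,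
    real_inner_comm (x' t) u, real_inner_comm (x' t) g, real_inner_comm u g]
  ring

theorem half_mul_norm_sq_le_dampedEnergy {f : H → ℝ} {xstar : H} {w a da : ℝ → ℝ}
    {x x' : ℝ → H} {μ t : ℝ} (hgrowth : μ / 2 * ‖x t - xstar‖ ^ 2 ≤ f (x t) - f xstar)
    (hw : 0 ≤ w t) (hda : da t ≤ 0) (haμ : a t ^ 2 ≤ 2 * μ) :
    1 / 2 * w t * ‖x' t + a t • (x t - xstar)‖ ^ 2 ≤ dampedEnergy f xstar w a da x x' t := by
  have hcoeff : (a t ^ 2 / 4 + da t / 2) * ‖x t - xstar‖ ^ 2 ≤ μ / 2 * ‖x t - xstar‖ ^ 2 :=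
    mul_le_mul_of_nonneg_right (by linarith) (sq_nonneg _)
  have := mul_nonneg hw (sub_nonneg.mpr (hcoeff.trans hgrowth))
  unfold dampedEnergy
  linarith

theorem antitoneOn_dampedEnergy [CompleteSpace H] {f : H → ℝ} {f' : H → H} {xstar : H} {μ T : ℝ}
    {w a da dda : ℝ → ℝ} {x x' x'' : ℝ → H}
    (hf : ∀ p, HasGradientAt f (f' p) p)
    (hsc : ∀ p, f xstar ≥ f p + ⟪f' p, xstar - p⟫ + μ / 2 * ‖xstar - p‖ ^ 2)
    (hw : ∀ t ≥ T, HasDerivAt w (a t * w t) t) (hw₀ : ∀ t ≥ T, 0 ≤ w t)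
    (ha : ∀ t ≥ T, HasDerivAt a (da t) t) (hda : ∀ t ≥ T, HasDerivAt da (dda t) t)
    (ha₀ : ∀ t ≥ T, 0 ≤ a t) (hdda : ∀ t ≥ T, 0 ≤ dda t) (haμ : ∀ t ≥ T, a t ^ 2 ≤ 2 * μ)
    (hx : ∀ t ≥ T, HasDerivAt x (x' t) t) (hx' : ∀ t ≥ T, HasDerivAt x' (x'' t) t)
    (hode : ∀ t ≥ T, x'' t + (3 / 2 * a t) • x' t + f' (x t) = 0) :
    AntitoneOn (dampedEnergy f xstar w a da x x') (Set.Ici T) := by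
  have hderiv : ∀ t ≥ T, HasDerivAt (dampedEnergy f xstar w a da x x')
      (w t * (a t * (f (x t) - f xstar - ⟪f' (x t), x t - xstar⟫)
        + (a t ^ 3 / 4 - dda t / 2) * ‖x t - xstar‖ ^ 2)) t := by
    intro t ht
    have hx'' : x'' t = -(3 / 2 * a t) • x' t - f' (x t) := by
      refine neg_smul (3 / 2 * a t) (x' t) ▸ eq_sub_of_add_eq (eq_neg_of_add_eq_zero_left ?_)
      rw [← hode t ht]
      abel
    exact hasDerivAt_dampedEnergy (hf _) (hw t ht) (ha t ht) (hda t ht) (hx t ht)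
      (hx'' ▸ hx' t ht)
  refine antitoneOn_of_hasDerivWithinAt_nonpos (convex_Ici T)
    (fun t ht ↦ (hderiv t ht).continuousAt.continuousWithinAt)
    (fun t ht ↦ (hderiv t (interior_subset ht)).hasDerivWithinAt) ?_
  intro t ht
  have ht : t ≥ T := interior_subset ht
  have hgap : f (x t) - f xstar - ⟪f' (x t), x t - xstar⟫ ≤ -(μ / 2) * ‖x t - xstar‖ ^ 2 := by
    have h := hsc (x t)
    rw [← neg_sub (x t) xstar, inner_neg_right, norm_neg] at h
    linarith
  have hu := sq_nonneg ‖x t - xstar‖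
  -- `a³/4 - a μ/2 = a (a² - 2μ)/4 ≤ 0`
  have hbracket : a t * (f (x t) - f xstar - ⟪f' (x t), x t - xstar⟫)
      + (a t ^ 3 / 4 - dda t / 2) * ‖x t - xstar‖ ^ 2 ≤ 0 := by
    nlinarith [mul_le_mul_of_nonneg_left hgap (ha₀ t ht), haμ t ht, hdda t ht,
      mul_nonneg (mul_nonneg (ha₀ t ht) hu) (sub_nonneg.mpr (haμ t ht)), mul_nonneg (hdda t ht) hu]
  exact mul_nonpos_of_nonneg_of_nonpos (hw₀ t ht) hbracket

end DampedEnergy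

section PowerDamping

variable {μ r α : ℝ}

theorem hasDerivAt_exp_mul_rpow_one_sub (hα : α ≠ 1) {t : ℝ} (ht : 0 < t) :
    HasDerivAt (fun s ↦ Real.exp (2 / 3 * (r / (1 - α)) * s ^ (1 - α)))
      (2 / 3 * r * t ^ (-α) * Real.exp (2 / 3 * (r / (1 - α)) * t ^ (1 - α))) t := by
  have h1α : 1 - α ≠ 0 := sub_ne_zero.mpr hα.symm
  refine (((Real.hasDerivAt_rpow_const (p := 1 - α) (Or.inl ht.ne')).const_mul
    (2 / 3 * (r / (1 - α)))).exp).congr_deriv ?_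
  rw [sub_sub_cancel_left]
  field_simp

theorem sq_mul_rpow_neg_le (hμ : 0 < μ) (hα : 0 < α) {t : ℝ} (ht : 0 < t)
    (hT : (2 * r ^ 2 / (9 * μ)) ^ (1 / (2 * α)) ≤ t) :
    (2 / 3 * r * t ^ (-α)) ^ 2 ≤ 2 * μ := by
  have hpow : 2 * r ^ 2 / (9 * μ) ≤ t ^ (2 * α) := by
    calc 2 * r ^ 2 / (9 * μ) = ((2 * r ^ 2 / (9 * μ)) ^ (1 / (2 * α))) ^ (2 * α) := by
          rw [← Real.rpow_mul (by positivity), one_div_mul_cancel (by positivity), Real.rpow_one]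
      _ ≤ t ^ (2 * α) := Real.rpow_le_rpow (by positivity) hT (by positivity)
  have hneg : (t ^ (-α)) ^ 2 = (t ^ (2 * α))⁻¹ := by
    rw [← Real.rpow_natCast, ← Real.rpow_mul ht.le, ← Real.rpow_neg ht.le]
    ring_nf
  rw [mul_pow, hneg, ← div_eq_mul_inv, div_le_iff₀ (by positivity)]
  rw [div_le_iff₀ (by positivity)] at hpow
  nlinarith

theorem damping_coeff_eq {t : ℝ} (ht : 0 < t) :
    (r ^ 2 * t ^ (-α) - 3 * r * α * t⁻¹) / (9 * t ^ α)
      = (2 / 3 * r * t ^ (-α)) ^ 2 / 4 + 2 / 3 * r * -α * t ^ (-α - 1) / 2 := by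
  have htα : 0 < t ^ α := Real.rpow_pos_of_pos ht α
  rw [Real.rpow_sub_one ht.ne', Real.rpow_neg ht.le]
  field_simp
  ring

theorem antitoneOn_dampedEnergy_rpow {H : Type*} [NormedAddCommGroup H] [InnerProductSpace ℝ H]
    [CompleteSpace H] (hμ : 0 < μ) (hr : 0 < r) (hα0 : 0 < α) (hα1 : α < 1)
    {f : H → ℝ} {f' : H → H} {xstar : H} (hf : ∀ p, HasGradientAt f (f' p) p)
    (hsc : ∀ p, f xstar ≥ f p + ⟪f' p, xstar - p⟫ + μ / 2 * ‖xstar - p‖ ^ 2)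
    {x x' x'' : ℝ → H} (hx : ∀ t > 0, HasDerivAt x (x' t) t)
    (hx' : ∀ t > 0, HasDerivAt x' (x'' t) t)
    (hode : ∀ t > 0, x'' t + (r / t ^ α) • x' t + f' (x t) = 0) :
    AntitoneOn (dampedEnergy f xstar (fun s ↦ Real.exp (2 / 3 * (r / (1 - α)) * s ^ (1 - α)))
      (fun s ↦ 2 / 3 * r * s ^ (-α)) (fun s ↦ 2 / 3 * r * -α * s ^ (-α - 1)) x x')
      (Set.Ici ((2 * r ^ 2 / (9 * μ)) ^ (1 / (2 * α)))) := by
  have hT : 0 < (2 * r ^ 2 / (9 * μ)) ^ (1 / (2 * α)) := by positivity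
  have hpos : ∀ t ≥ (2 * r ^ 2 / (9 * μ)) ^ (1 / (2 * α)), 0 < t := fun t ht ↦ hT.trans_le ht
  refine antitoneOn_dampedEnergy (fun p ↦ hf p) hsc
    (fun t ht ↦ hasDerivAt_exp_mul_rpow_one_sub hα1.ne (hpos t ht)) (fun t _ ↦ (Real.exp_pos _).le)
    (fun t ht ↦ ((Real.hasDerivAt_rpow_const (Or.inl (hpos t ht).ne')).const_mul
      (2 / 3 * r)).congr_deriv (by ring))
    (fun t ht ↦ (Real.hasDerivAt_rpow_const (Or.inl (hpos t ht).ne')).const_mul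
      (2 / 3 * r * -α))
    (fun t ht ↦ by have := hpos t ht; positivity) (fun t ht ↦ ?_)
    (fun t ht ↦ sq_mul_rpow_neg_le hμ hα0 (hpos t ht) ht)
    (fun t ht ↦ hx t (hpos t ht)) (fun t ht ↦ hx' t (hpos t ht)) (fun t ht ↦ ?_)
  · have := Real.rpow_pos_of_pos (hpos t ht) (-α - 1 - 1)
    calc (0 : ℝ) ≤ 2 / 3 * r * (α * (α + 1)) * t ^ (-α - 1 - 1) := by positivity
      _ = _ := by ring
  · have hcoeff : r / t ^ α = 3 / 2 * (2 / 3 * r * t ^ (-α)) := by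
      rw [Real.rpow_neg (hpos t ht).le, div_eq_mul_inv]
      ring
    rw [← hcoeff]
    exact hode t (hpos t ht)

end PowerDamping

/-- Inequality (31) in the proof of Lemma 9: for `t ≥ T := (2r²/(9μ))^(1/(2α))`,
`(1/2) exp((2/3)(r/(1-α)) t^(1-α)) ‖ẋ(t) + (2/3) r t^(-α) (x t - x_*)‖² ≤ E(T)`. -/
theorem stmt_14
{n : ℕ} (μ r α : ℝ) (hμ : 0 < μ) (hr : 0 < r) (hα0 : 0 < α) (hα1 : α < 1)
    (f : EuclideanSpace ℝ (Fin n) → ℝ)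
    (f' : EuclideanSpace ℝ (Fin n) → EuclideanSpace ℝ (Fin n))
    (hf' : ∀ p, HasGradientAt f (f' p) p)
    (hsc : ∀ p q, f q ≥ f p + ⟪f' p, q - p⟫ + μ / 2 * ‖q - p‖ ^ 2)
    (xstar : EuclideanSpace ℝ (Fin n)) (hmin : ∀ p, f xstar ≤ f p)
    (x x' x'' : ℝ → EuclideanSpace ℝ (Fin n))
    (hx : ∀ t > (0:ℝ), HasDerivAt x (x' t) t)
    (hx' : ∀ t > (0:ℝ), HasDerivAt x' (x'' t) t)
    (hode : ∀ t > (0:ℝ), x'' t + (r / t ^ α) • x' t + f' (x t) = 0)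
(E : ℝ → ℝ)
    (hE : ∀ t, E t
        = Real.exp (2 / 3 * (r / (1 - α)) * t ^ (1 - α))
            * (f (x t) - f xstar
                - (r ^ 2 * t ^ (-α) - 3 * r * α * t⁻¹) / (9 * t ^ α) * ‖x t - xstar‖ ^ 2)
          + 1 / 2 * Real.exp (2 / 3 * (r / (1 - α)) * t ^ (1 - α))
            * ‖x' t + (2 / 3 * r * t ^ (-α)) • (x t - xstar)‖ ^ 2) :
    ∀ t, (2 * r ^ 2 / (9 * μ)) ^ (1 / (2 * α)) ≤ t →
      1 / 2 * Real.exp (2 / 3 * (r / (1 - α)) * t ^ (1 - α))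
          * ‖x' t + (2 / 3 * r * t ^ (-α)) • (x t - xstar)‖ ^ 2
        ≤ E ((2 * r ^ 2 / (9 * μ)) ^ (1 / (2 * α))) := by
  intro t htT
  have hT : 0 < (2 * r ^ 2 / (9 * μ)) ^ (1 / (2 * α)) := by positivity
  have ht : 0 < t := hT.trans_le htT
  set D := dampedEnergy f xstar (fun s ↦ Real.exp (2 / 3 * (r / (1 - α)) * s ^ (1 - α)))
    (fun s ↦ 2 / 3 * r * s ^ (-α)) (fun s ↦ 2 / 3 * r * -α * s ^ (-α - 1)) x x' with hD
  have hE_eq : ∀ s > 0, E s = D s := fun s hs ↦ by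
    rw [hE s, hD, dampedEnergy, damping_coeff_eq hs]
  have hgrowth : μ / 2 * ‖x t - xstar‖ ^ 2 ≤ f (x t) - f xstar :=
    quadratic_growth_of_isMin (hf' xstar) hmin (hsc xstar) (x t)
  have hda : 2 / 3 * r * -α * t ^ (-α - 1) ≤ 0 := by
    have := Real.rpow_pos_of_pos ht (-α - 1)
    nlinarith [mul_pos hr hα0]
  calc _ ≤ D t := half_mul_norm_sq_le_dampedEnergy hgrowth (Real.exp_pos _).le hda
        (sq_mul_rpow_neg_le hμ hα0 ht htT)
    _ ≤ D _ := antitoneOn_dampedEnergy_rpow hμ hr hα0 hα1 hf' (fun p ↦ hsc p xstar) hx hx' hode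
        Set.self_mem_Ici htT htT
    _ = _ := (hE_eq _ hT).symm
end

section
/- Suppose y : (0,∞) → ℝ^n is differentiable, extends continuously to 0 with value y(0), and satisfies ‖ẏ(s)‖ ≤ K · exp((1/3)·(r/(1−α))·s^{1−α}) for all s in (0, t], where K ≥ 0. Then ‖y(t)‖ · exp(−(2/3)·(r/(1−α))·t^{1−α}) ≤ (3K/r)·t^{α}·exp(−(1/3)·(r/(1−α))·t^{1−α}) + ‖y(0)‖·exp(−(2/3)·(r/(1−α))·t^{1−α}) for every t > 0. -/
/-!
The weight `F u = (3K/r) u^α exp(κ u^(1-α))`, with `κ = r / (3(1-α))`, satisfies `F 0 = 0` and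
`F' u = (3K/r) (α u^(α-1) + r/3) exp(κ u^(1-α)) ≥ K exp(κ u^(1-α))`, so it dominates the
bound on `‖ẏ‖`. Comparing `y` with `F` on `[ε, t]` and letting `ε → 0` gives
`‖y t - y 0‖ ≤ F t`; multiplying by `exp(-2κ t^(1-α))` yields the claim.
-/

open Set Real

theorem norm_sub_le_sub_of_norm_deriv_le_deriv {E : Type*} [NormedAddCommGroup E]
    [NormedSpace ℝ E] {f f' : ℝ → E} {G g : ℝ → ℝ} {a b : ℝ}
    (hab : a < b) (hf : ContinuousOn f (Icc a b)) (hG : ContinuousOn G (Icc a b))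
    (hf' : ∀ x ∈ Ioo a b, HasDerivAt f (f' x) x) (hG' : ∀ x ∈ Ioo a b, HasDerivAt G (g x) x)
    (bound : ∀ x ∈ Ioo a b, ‖f' x‖ ≤ g x) :
    ‖f b - f a‖ ≤ G b - G a := by
  have hshifted : ∀ ε ∈ Ioo a b, ‖f b - f ε‖ ≤ G b - G ε := by
    intro ε hε
    have hsub : Ico ε b ⊆ Ioo a b := fun x hx => ⟨hε.1.trans_le hx.1, hx.2⟩
    refine image_norm_le_of_norm_deriv_right_le_deriv_boundary' (f := fun x => f x - f ε)
      (B := fun x => G x - G ε) ?_ (fun x hx => ((hf' x (hsub hx)).sub_const _).hasDerivWithinAt)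
      (by simp) ?_ (fun x hx => ((hG' x (hsub hx)).sub_const _).hasDerivWithinAt)
      (fun x hx => bound x (hsub hx)) ⟨hε.2.le, le_rfl⟩
    · exact (hf.mono (Icc_subset_Icc_left hε.1.le)).sub continuousOn_const
    · exact (hG.mono (Icc_subset_Icc_left hε.1.le)).sub continuousOn_const
  have ha : a ∈ closure (Ioo a b) := by
    rw [closure_Ioo hab.ne]
    exact left_mem_Icc.2 hab.le
  have hfa := (hf a (left_mem_Icc.2 hab.le)).mono Ioo_subset_Icc_self
  have hGa := (hG a (left_mem_Icc.2 hab.le)).mono Ioo_subset_Icc_self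
  exact ContinuousWithinAt.closure_le ha (continuousWithinAt_const.sub hfa).norm
    (continuousWithinAt_const.sub hGa) hshifted

theorem hasDerivAt_rpow_mul_exp_rpow (α κ : ℝ) {u : ℝ} (hu : 0 < u) :
    HasDerivAt (fun u : ℝ => u ^ α * exp (κ * u ^ (1 - α)))
      ((α * u ^ (α - 1) + κ * (1 - α)) * exp (κ * u ^ (1 - α))) u := by
  have hpow : ∀ p : ℝ, HasDerivAt (fun u : ℝ => u ^ p) (p * u ^ (p - 1)) u :=
    fun p => hasDerivAt_rpow_const (Or.inl hu.ne')
  have hcancel : u ^ α * u ^ (1 - α - 1) = 1 := by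
    rw [← rpow_add hu]
    simp
  refine ((hpow α).mul ((hpow (1 - α)).const_mul κ).exp).congr_deriv ?_
  linear_combination (κ * (1 - α) * exp (κ * u ^ (1 - α))) * hcancel

theorem continuous_rpow_mul_exp_rpow {α : ℝ} (κ : ℝ) (hα0 : 0 ≤ α) (hα1 : α ≤ 1) :
    Continuous (fun u : ℝ => u ^ α * exp (κ * u ^ (1 - α))) := by
  have : (0 : ℝ) ≤ 1 - α := by linarith
  fun_prop (disch := assumption)

theorem mul_exp_le_mul_deriv_rpow_mul_exp_rpow {r α κ K s : ℝ} (hr : 0 < r) (hα : 0 ≤ α)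
    (hK : 0 ≤ K) (hs : 0 < s) (hκ : κ * (1 - α) = r / 3) :
    K * exp (κ * s ^ (1 - α)) ≤
      3 * K / r * ((α * s ^ (α - 1) + κ * (1 - α)) * exp (κ * s ^ (1 - α))) := by
  have hα_term : 0 ≤ α * s ^ (α - 1) := mul_nonneg hα (rpow_nonneg hs.le _)
  calc K * exp (κ * s ^ (1 - α)) = 3 * K / r * ((0 + κ * (1 - α)) * exp (κ * s ^ (1 - α))) := by
        rw [zero_add, hκ]
        field_simp
    _ ≤ _ := by gcongr

/-- Inequality (34) in the proof of Lemma 9: if `y` is differentiable on `(0, ∞)`,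
extends continuously to `0`, and `‖ẏ(s)‖ ≤ K exp((1/3)(r/(1-α)) s^(1-α))` on `(0, t]`
with `K ≥ 0`, then `‖y t‖ exp(-(2/3)(r/(1-α)) t^(1-α))
  ≤ (3K/r) t^α exp(-(1/3)(r/(1-α)) t^(1-α)) + ‖y 0‖ exp(-(2/3)(r/(1-α)) t^(1-α))`. -/
theorem stmt_16 {n : ℕ} (r α K : ℝ) (hr : 0 < r) (hα0 : 0 < α) (hα1 : α < 1) (hK : 0 ≤ K)
    (y y' : ℝ → EuclideanSpace ℝ (Fin n))
    (hy : ∀ s > (0:ℝ), HasDerivAt y (y' s) s)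
    (hy0 : ContinuousWithinAt y (Set.Ici 0) 0) :
    ∀ t > (0:ℝ),
      (∀ s ∈ Set.Ioc (0:ℝ) t, ‖y' s‖ ≤ K * Real.exp (1 / 3 * (r / (1 - α)) * s ^ (1 - α))) →
      ‖y t‖ * Real.exp (-(2 / 3 * (r / (1 - α)) * t ^ (1 - α)))
        ≤ 3 * K / r * t ^ α * Real.exp (-(1 / 3 * (r / (1 - α)) * t ^ (1 - α)))
          + ‖y 0‖ * Real.exp (-(2 / 3 * (r / (1 - α)) * t ^ (1 - α))) := by
  intro t ht hbound
  set κ := 1 / 3 * (r / (1 - α))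
  have hκ : κ * (1 - α) = r / 3 := by
    simp only [κ]
    field_simp [(sub_pos.2 hα1).ne']
  have hyc : ContinuousOn y (Icc 0 t) := by
    rintro x ⟨hx0, -⟩
    rcases hx0.eq_or_lt with rfl | hx
    · exact hy0.mono Icc_subset_Ici_self
    · exact (hy x hx).continuousAt.continuousWithinAt
  have hy_t : ‖y t - y 0‖ ≤ 3 * K / r * (t ^ α * exp (κ * t ^ (1 - α))) := by
    simpa [zero_rpow hα0.ne'] using norm_sub_le_sub_of_norm_deriv_le_deriv ht hyc
      ((continuous_rpow_mul_exp_rpow κ hα0.le hα1.le).const_mul _).continuousOn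
      (fun s hs => hy s hs.1)
      (fun s hs => (hasDerivAt_rpow_mul_exp_rpow α κ hs.1).const_mul _)
      (fun s hs => (hbound s (Ioo_subset_Ioc_self hs)).trans
        (mul_exp_le_mul_deriv_rpow_mul_exp_rpow hr hα0.le hK hs.1 hκ))
  have hexp : exp (κ * t ^ (1 - α)) * exp (-(2 * κ * t ^ (1 - α))) = exp (-(κ * t ^ (1 - α))) := by
    rw [← exp_add]
    ring_nf
  calc ‖y t‖ * exp (-(2 / 3 * (r / (1 - α)) * t ^ (1 - α)))
      ≤ (3 * K / r * (t ^ α * exp (κ * t ^ (1 - α))) + ‖y 0‖) *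
          exp (-(2 / 3 * (r / (1 - α)) * t ^ (1 - α))) := by
        gcongr
        linarith [norm_sub_norm_le (y t) (y 0)]
    _ = _ := by
      rw [show 2 / 3 * (r / (1 - α)) = 2 * κ by ring, add_mul, mul_assoc, mul_assoc, hexp]
      ring
end
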